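/- arXiv:1702.01718 — 2 statements merged into one kernel-verified Lean document; each statement's English description precedes it below -/
import Mathlib

section
/- Let y_1, …, y_{N−1} solve the periodic semi-discrete FtL system, let k ∈ ℝ, let j ∈ {1,…,N−1}, and let t > 0 be a time with y_j(t) ≠ k. Then the function s ↦ (y_j(s) − k)^− is differentiable at t and its derivative at t is at most (1/ℓ)[−H(k − y_{j+1}(t))(V(y_{j+1}(t)) − V(k)) + H(k − y_j(t))(V(y_j(t)) − V(k))]. -/
/-- `y j`, `j = 1, …, N-1`, solves the periodic semi-discrete Follow-the-Leader
system `ẏ_j(t) = (1/ℓ)(V(y_{j+1}(t)) − V(y_j(t)))` on `[0, ∞)`, with the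
periodic convention `y_N := y_1`. -/
def IsFtLSolution (N : ℕ) (ℓ : ℝ) (V : ℝ → ℝ) (y : ℕ → ℝ → ℝ) : Prop :=
  (∀ t : ℝ, y N t = y 1 t) ∧
  ∀ j ∈ Finset.Icc 1 (N - 1), ∀ t ∈ Set.Ici (0 : ℝ),
    HasDerivWithinAt (y j) (1 / ℓ * (V (y (j + 1) t) - V (y j t))) (Set.Ici (0 : ℝ)) t

/-- The Heaviside function: `H(r) = 0` for `r ≤ 0` and `H(r) = 1` for `r > 0`. -/
noncomputable def heaviside (r : ℝ) : ℝ := if 0 < r then 1 else 0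

/-!
Where `y_j(t) ≠ k`, the function `(y_j - k)⁻` is locally either `k - y_j` or `0`, so its derivative
is `-H(k - y_j) ẏ_j`. The claimed bound exceeds this by
`(1/ℓ) (H(k - y_j) - H(k - y_{j+1})) (V(y_{j+1}) - V(k))`, which is nonnegative because `V` is
nondecreasing: both factors are `≤ 0` when `y_{j+1} < k` and `≥ 0` otherwise.
-/

open Filter Topology

lemma heaviside_of_pos {r : ℝ} (hr : 0 < r) : heaviside r = 1 := if_pos hr

lemma heaviside_of_nonpos {r : ℝ} (hr : r ≤ 0) : heaviside r = 0 := if_neg hr.not_gt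

lemma heaviside_nonneg (r : ℝ) : 0 ≤ heaviside r := by
  unfold heaviside
  split_ifs <;> norm_num

lemma heaviside_le_one (r : ℝ) : heaviside r ≤ 1 := by
  unfold heaviside
  split_ifs <;> norm_num

lemma HasDerivAt.neg_min_zero {f : ℝ → ℝ} {f' t : ℝ} (hf : HasDerivAt f f' t) (hft : f t ≠ 0) :
    HasDerivAt (fun s => -min (f s) 0) (-(heaviside (-f t) * f')) t := by
  rcases hft.lt_or_gt with hneg | hpos
  · have hnear : (fun s => -min (f s) 0) =ᶠ[𝓝 t] fun s => -f s := by
      filter_upwards [hf.continuousAt.eventually_lt continuousAt_const hneg] with s hs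
      rw [min_eq_left hs.le]
    rw [heaviside_of_pos (neg_pos.2 hneg), one_mul]
    exact hf.neg.congr_of_eventuallyEq hnear
  · have hnear : (fun s => -min (f s) 0) =ᶠ[𝓝 t] fun _ => 0 := by
      filter_upwards [continuousAt_const.eventually_lt hf.continuousAt hpos] with s hs
      rw [min_eq_right hs.le, neg_zero]
    rw [heaviside_of_nonpos (neg_nonpos.2 hpos.le), zero_mul, neg_zero]
    exact (hasDerivAt_const t 0).congr_of_eventuallyEq hnear

lemma Monotone.heaviside_sub_mul_sub_nonneg {V : ℝ → ℝ} (hV : Monotone V) (a b k : ℝ) :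
    0 ≤ (heaviside (k - a) - heaviside (k - b)) * (V b - V k) := by
  rcases lt_or_ge b k with hbk | hkb
  · rw [heaviside_of_pos (sub_pos.2 hbk)]
    exact mul_nonneg_of_nonpos_of_nonpos (sub_nonpos.2 (heaviside_le_one _))
      (sub_nonpos.2 (hV hbk.le))
  · rw [heaviside_of_nonpos (sub_nonpos.2 hkb), sub_zero]
    exact mul_nonneg (heaviside_nonneg _) (sub_nonneg.2 (hV hkb))

lemma IsFtLSolution.hasDerivAt {N : ℕ} {ℓ : ℝ} {V : ℝ → ℝ} {y : ℕ → ℝ → ℝ}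
    (hy : IsFtLSolution N ℓ V y) {j : ℕ} (hj : j ∈ Finset.Icc 1 (N - 1)) {t : ℝ} (ht : 0 < t) :
    HasDerivAt (y j) (1 / ℓ * (V (y (j + 1) t) - V (y j t))) t :=
  (hy.2 j hj t ht.le).hasDerivAt (Ici_mem_nhds ht)

theorem ftl_negative_part_entropy_inequality_general
    (N : ℕ) (ℓ : ℝ) (hℓ : 0 < ℓ)
    (V : ℝ → ℝ) (hVmono : Monotone V)
    (y : ℕ → ℝ → ℝ) (hy : IsFtLSolution N ℓ V y)
    (k : ℝ) (j : ℕ) (hj : j ∈ Finset.Icc 1 (N - 1))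
    (t : ℝ) (ht : 0 < t) (hne : y j t ≠ k) :
    ∃ d : ℝ, HasDerivAt (fun s => -min (y j s - k) 0) d t ∧
      d ≤ 1 / ℓ * (-(heaviside (k - y (j + 1) t) * (V (y (j + 1) t) - V k))
            + heaviside (k - y j t) * (V (y j t) - V k)) := by
  have hderiv := ((hy.hasDerivAt hj ht).sub_const k).neg_min_zero (sub_ne_zero.2 hne)
  rw [neg_sub] at hderiv
  refine ⟨_, hderiv, ?_⟩
  have hkato := mul_nonneg (one_div_nonneg.2 hℓ.le)
    (hVmono.heaviside_sub_mul_sub_nonneg (y j t) (y (j + 1) t) k)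
  linear_combination hkato

/-- If `y` solves the periodic semi-discrete FtL system, `k ∈ ℝ`,
`j ∈ {1,…,N−1}` and `t > 0` with `y_j(t) ≠ k`, then `s ↦ (y_j(s) − k)⁻` is
differentiable at `t` with derivative at most
`(1/ℓ)[−H(k − y_{j+1}(t))(V(y_{j+1}(t)) − V(k)) + H(k − y_j(t))(V(y_j(t)) − V(k))]`. -/
theorem ftl_negative_part_entropy_inequality
    (N : ℕ) (hN : 2 ≤ N) (ℓ : ℝ) (hℓ : 0 < ℓ)
    (V : ℝ → ℝ) (LV : NNReal) (hVlip : LipschitzWith LV V) (hVmono : Monotone V)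
    (y : ℕ → ℝ → ℝ) (hy : IsFtLSolution N ℓ V y)
    (k : ℝ) (j : ℕ) (hj : j ∈ Finset.Icc 1 (N - 1))
    (t : ℝ) (ht : 0 < t) (hne : y j t ≠ k) :
    ∃ d : ℝ, HasDerivAt (fun s => -min (y j s - k) 0) d t ∧
      d ≤ 1 / ℓ * (-(heaviside (k - y (j + 1) t) * (V (y (j + 1) t) - V k))
            + heaviside (k - y j t) * (V (y j t) - V k)) :=
  ftl_negative_part_entropy_inequality_general N ℓ hℓ V hVmono y hy k j hj t ht hne
end

section
/- Assume the CFL condition λ L_V ≤ 1. Then the periodic explicit Euler FtL scheme is monotone: if (y_i^n) and (ỹ_i^n) are two sequences generated by the scheme and y_i^0 ≤ ỹ_i^0 for all i = 1,…,N−1, then y_i^n ≤ ỹ_i^n for all i = 1,…,N−1 and all n ≥ 0. -/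
/-- `y n i`, `i = 1, …, N-1`, is generated by the periodic explicit Euler
Follow-the-Leader scheme `y_i^{n+1} = y_i^n + λ(V(y_{i+1}^n) − V(y_i^n))`,
with the periodic convention `y_N^n := y_1^n`. -/
def IsEulerFtL (N : ℕ) (lam : ℝ) (V : ℝ → ℝ) (y : ℕ → ℕ → ℝ) : Prop :=
  (∀ n : ℕ, y n N = y n 1) ∧
  ∀ n : ℕ, ∀ i ∈ Finset.Icc 1 (N - 1),
    y (n + 1) i = y n i + lam * (V (y n (i + 1)) - V (y n i))

/-! The update `y_i + λ (V(y_{i+1}) − V(y_i))` is nondecreasing in `y_{i+1}` because `V` is, and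
nondecreasing in `y_i` because, under the CFL condition, the Lipschitz term `λ V(y_i)` cannot grow
faster than `y_i` itself. An induction on the time step, using periodicity for the last
neighbour `y_N = y_1`, then propagates the initial ordering. -/

open Finset

theorem LipschitzWith.monotone_sub_mul {V : ℝ → ℝ} {K : NNReal} (hV : LipschitzWith K V)
    {lam : ℝ} (hlam : 0 ≤ lam) (hCFL : lam * K ≤ 1) : Monotone fun x ↦ x - lam * V x := by
  intro a b hab
  have hVab : V b - V a ≤ K * (b - a) := by
    have h := hV.dist_le_mul b a
    rw [Real.dist_eq, Real.dist_eq, abs_of_nonneg (sub_nonneg.mpr hab)] at h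
    exact (abs_le.mp h).2
  have : lam * (V b - V a) ≤ b - a :=
    calc lam * (V b - V a) ≤ lam * (K * (b - a)) := mul_le_mul_of_nonneg_left hVab hlam
      _ = lam * K * (b - a) := by ring
      _ ≤ 1 * (b - a) := mul_le_mul_of_nonneg_right hCFL (sub_nonneg.mpr hab)
      _ = b - a := one_mul _
  dsimp only
  linarith

theorem ftl_update_le_update {V : ℝ → ℝ} {K : NNReal} (hVlip : LipschitzWith K V)
    (hVmono : Monotone V) {lam : ℝ} (hlam : 0 ≤ lam) (hCFL : lam * K ≤ 1)
    {a a' b b' : ℝ} (ha : a ≤ a') (hb : b ≤ b') :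
    a + lam * (V b - V a) ≤ a' + lam * (V b' - V a') := by
  have hself : a - lam * V a ≤ a' - lam * V a' := hVlip.monotone_sub_mul hlam hCFL ha
  have hnext : lam * V b ≤ lam * V b' := mul_le_mul_of_nonneg_left (hVmono hb) hlam
  linarith

theorem IsEulerFtL.le_succ_of_le {N : ℕ} {lam : ℝ} {V : ℝ → ℝ} {y yt : ℕ → ℕ → ℝ}
    (hy : IsEulerFtL N lam V y) (hyt : IsEulerFtL N lam V yt) {n : ℕ}
    (hle : ∀ i ∈ Icc 1 (N - 1), y n i ≤ yt n i) {i : ℕ} (hi : i ∈ Icc 1 (N - 1)) :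
    y n (i + 1) ≤ yt n (i + 1) := by
  rw [mem_Icc] at hi
  by_cases hlast : i + 1 = N
  · rw [hlast, hy.1 n, hyt.1 n]
    exact hle 1 (mem_Icc.mpr ⟨le_rfl, by omega⟩)
  · exact hle (i + 1) (mem_Icc.mpr ⟨by omega, by omega⟩)

theorem eulerFtL_monotone_general
    (N : ℕ) (ℓ Δt : ℝ) (hℓ : 0 < ℓ) (hΔt : 0 < Δt)
    (V : ℝ → ℝ) (LV : NNReal) (hVlip : LipschitzWith LV V) (hVmono : Monotone V)
    (hCFL : Δt / ℓ * (LV : ℝ) ≤ 1)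
    (y yt : ℕ → ℕ → ℝ)
    (hy : IsEulerFtL N (Δt / ℓ) V y) (hyt : IsEulerFtL N (Δt / ℓ) V yt)
    (h0 : ∀ i ∈ Finset.Icc 1 (N - 1), y 0 i ≤ yt 0 i) :
    ∀ n : ℕ, ∀ i ∈ Finset.Icc 1 (N - 1), y n i ≤ yt n i := by
  intro n
  induction n with
  | zero => exact h0
  | succ n ih =>
    intro i hi
    rw [hy.2 n i hi, hyt.2 n i hi]
    exact ftl_update_le_update hVlip hVmono (by positivity) hCFL (ih i hi)
      (hy.le_succ_of_le hyt ih hi)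

/-- Under the CFL condition, the periodic explicit Euler FtL scheme is
monotone: initial comparison `y_i^0 ≤ ỹ_i^0` is propagated to all times. -/
theorem eulerFtL_monotone
    (N : ℕ) (hN : 2 ≤ N) (ℓ Δt : ℝ) (hℓ : 0 < ℓ) (hΔt : 0 < Δt)
    (V : ℝ → ℝ) (LV : NNReal) (hVlip : LipschitzWith LV V) (hVmono : Monotone V)
    (hCFL : Δt / ℓ * (LV : ℝ) ≤ 1)
    (y yt : ℕ → ℕ → ℝ)
    (hy : IsEulerFtL N (Δt / ℓ) V y) (hyt : IsEulerFtL N (Δt / ℓ) V yt)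
    (h0 : ∀ i ∈ Finset.Icc 1 (N - 1), y 0 i ≤ yt 0 i) :
    ∀ n : ℕ, ∀ i ∈ Finset.Icc 1 (N - 1), y n i ≤ yt n i :=
  eulerFtL_monotone_general N ℓ Δt hℓ hΔt V LV hVlip hVmono hCFL y yt hy hyt h0
end
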